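/- Let X ∈ ℝ^{n×p} satisfy ‖XᵀX − I_p‖_F ≤ 1/6. Then XᵀX is positive definite, and the distance from X to its projection onto the Stiefel manifold satisfies ‖X − X·(XᵀX)^{−1/2}‖_F ≤ (6/11)·‖XᵀX − I_p‖_F. -/

import Mathlib

/-!
Diagonalise `XᵀX = U diag(μ) Uᵀ`. Then `‖XᵀX - 1‖² = ∑ (μᵢ - 1)²`, so every `μᵢ` lies within `1/6`
of `1` and in particular is positive. The projection is `X U diag(μ^{-1/2}) Uᵀ`, and
`‖X - X U diag(μ^{-1/2}) Uᵀ‖² = ∑ μᵢ (1 - μᵢ^{-1/2})² = ∑ (√μᵢ - 1)²`; finally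
`√μ - 1 = (μ - 1) / (√μ + 1)` with `√μ + 1 ≥ 11/6`.
-/

open Matrix

attribute [local instance] Matrix.frobeniusNormedAddCommGroup Matrix.frobeniusNormedSpace

namespace ExPen

noncomputable def finner {n p : ℕ} (A B : Matrix (Fin n) (Fin p) ℝ) : ℝ := (Aᵀ * B).trace

noncomputable def Phi {p : ℕ} (M : Matrix (Fin p) (Fin p) ℝ) : Matrix (Fin p) (Fin p) ℝ :=
  (1 / 2 : ℝ) • (M + Mᵀ)

noncomputable def Amap {n p : ℕ} (X : Matrix (Fin n) (Fin p) ℝ) : Matrix (Fin p) (Fin p) ℝ :=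
  (3 / 2 : ℝ) • (1 : Matrix (Fin p) (Fin p) ℝ) - (1 / 2 : ℝ) • (Xᵀ * X)

noncomputable def g {n p : ℕ} (f : Matrix (Fin n) (Fin p) ℝ → ℝ)
    (X : Matrix (Fin n) (Fin p) ℝ) : ℝ := f (X * Amap X)

noncomputable def hpen {n p : ℕ} (f : Matrix (Fin n) (Fin p) ℝ → ℝ) (β : ℝ)
    (X : Matrix (Fin n) (Fin p) ℝ) : ℝ := g f X + β / 4 * ‖Xᵀ * X - 1‖ ^ 2

noncomputable def dualCLM {n p : ℕ} (G : Matrix (Fin n) (Fin p) ℝ) :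
    Matrix (Fin n) (Fin p) ℝ →L[ℝ] ℝ :=
  LinearMap.toContinuousLinearMap
    { toFun := fun D => (Gᵀ * D).trace
      map_add' := by intro D E; simp [Matrix.mul_add]
      map_smul' := by intro c D; simp [Matrix.mul_smul] }

def HasGradAt {n p : ℕ} (φ : Matrix (Fin n) (Fin p) ℝ → ℝ)
    (X G : Matrix (Fin n) (Fin p) ℝ) : Prop :=
  HasFDerivAt φ (dualCLM G) X

noncomputable def specNorm {n p : ℕ} (X : Matrix (Fin n) (Fin p) ℝ) : ℝ :=
  ‖LinearMap.toContinuousLinearMap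
    (Matrix.toEuclideanLin X : EuclideanSpace ℝ (Fin p) →ₗ[ℝ] EuclideanSpace ℝ (Fin n))‖

lemma posSemidef_tmul {n p : ℕ} (X : Matrix (Fin n) (Fin p) ℝ) : (Xᵀ * X).PosSemidef := by
  simpa [Matrix.conjTranspose_eq_transpose_of_trivial] using
    Matrix.posSemidef_conjTranspose_mul_self X

noncomputable def Pst {n p : ℕ} (X : Matrix (Fin n) (Fin p) ℝ) : Matrix (Fin n) (Fin p) ℝ :=
  X * ((posSemidef_tmul X).1.eigenvectorUnitary.1 *
    diagonal (fun i => Real.sqrt ((posSemidef_tmul X).1.eigenvalues i)) *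
    (star (posSemidef_tmul X).1.eigenvectorUnitary : Matrix (Fin p) (Fin p) ℝ))⁻¹

open Unitary

theorem frobenius_norm_sq_eq_trace {m k : Type*} [Fintype m] [Fintype k] (A : Matrix m k ℝ) :
    ‖A‖ ^ 2 = (Aᵀ * A).trace := by
  rw [frobenius_norm_def, ← Real.sqrt_eq_rpow, Real.sq_sqrt (by positivity), Finset.sum_comm]
  simp [Matrix.trace, Matrix.mul_apply, sq]

section UnitaryConj

variable {m : Type*} [Fintype m] [DecidableEq m] (U : unitaryGroup m ℝ)

theorem trace_conjStarAlgAut (A : Matrix m m ℝ) :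
    (conjStarAlgAut ℝ _ U A).trace = A.trace := by
  rw [conjStarAlgAut_apply, trace_mul_cycle, coe_star_mul_self, one_mul]

theorem transpose_conjStarAlgAut_diagonal (d : m → ℝ) :
    (conjStarAlgAut ℝ _ U (diagonal d))ᵀ = conjStarAlgAut ℝ _ U (diagonal d) := by
  rw [← conjTranspose_eq_transpose_of_trivial, ← star_eq_conjTranspose, ← map_star,
    star_eq_conjTranspose, diagonal_conjTranspose, star_trivial]

theorem inv_conjStarAlgAut_diagonal {d : m → ℝ} (hd : ∀ i, d i ≠ 0) :
    (conjStarAlgAut ℝ _ U (diagonal d))⁻¹ = conjStarAlgAut ℝ _ U (diagonal d⁻¹) := by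
  refine inv_eq_right_inv ?_
  rw [← map_mul, diagonal_mul_diagonal]
  simp [hd]

theorem norm_mul_conjStarAlgAut_diagonal_sq {n : Type*} [Fintype n] {X : Matrix n m ℝ}
    {μ : m → ℝ} (hX : Xᵀ * X = conjStarAlgAut ℝ _ U (diagonal μ)) (e : m → ℝ) :
    ‖X * conjStarAlgAut ℝ _ U (diagonal e)‖ ^ 2 = ∑ i, μ i * e i ^ 2 := by
  rw [frobenius_norm_sq_eq_trace, transpose_mul, transpose_conjStarAlgAut_diagonal,
    Matrix.mul_assoc, ← Matrix.mul_assoc Xᵀ, hX, ← map_mul, ← map_mul, trace_conjStarAlgAut,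
    diagonal_mul_diagonal, diagonal_mul_diagonal, trace_diagonal]
  congr 1 with i
  ring

theorem norm_conjStarAlgAut_diagonal_sq (d : m → ℝ) :
    ‖conjStarAlgAut ℝ _ U (diagonal d)‖ ^ 2 = ∑ i, d i ^ 2 := by
  rw [frobenius_norm_sq_eq_trace, transpose_conjStarAlgAut_diagonal, ← map_mul,
    trace_conjStarAlgAut, diagonal_mul_diagonal, trace_diagonal]
  simp only [sq]

theorem norm_conjStarAlgAut_diagonal_sub_one_sq (μ : m → ℝ) :
    ‖conjStarAlgAut ℝ _ U (diagonal μ) - 1‖ ^ 2 = ∑ i, (μ i - 1) ^ 2 := by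
  rw [← map_one (conjStarAlgAut ℝ _ U), ← diagonal_one, ← map_sub, diagonal_sub,
    norm_conjStarAlgAut_diagonal_sq]

theorem sub_mul_inv_conjStarAlgAut_diagonal {n : Type*} (X : Matrix n m ℝ) {d : m → ℝ}
    (hd : ∀ i, d i ≠ 0) :
    X - X * (conjStarAlgAut ℝ _ U (diagonal d))⁻¹ =
      X * conjStarAlgAut ℝ _ U (diagonal fun i => 1 - (d i)⁻¹) := by
  have hsub : (diagonal fun i => 1 - (d i)⁻¹) = 1 - diagonal d⁻¹ := by
    rw [← diagonal_one, diagonal_sub]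
    rfl
  rw [hsub, map_sub, map_one, Matrix.mul_sub, Matrix.mul_one, inv_conjStarAlgAut_diagonal U hd]

end UnitaryConj

theorem mul_one_sub_inv_sqrt_sq {t : ℝ} (ht : 0 < t) :
    t * (1 - (√t)⁻¹) ^ 2 = (√t - 1) ^ 2 := by
  have hs : √t ≠ 0 := (Real.sqrt_pos.mpr ht).ne'
  calc t * (1 - (√t)⁻¹) ^ 2 = (√t * (1 - (√t)⁻¹)) ^ 2 := by rw [mul_pow, Real.sq_sqrt ht.le]
    _ = (√t - 1) ^ 2 := by rw [mul_sub, mul_one, mul_inv_cancel₀ hs]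

theorem sq_sqrt_sub_one_le {t : ℝ} (ht : 5 / 6 ≤ t) :
    (√t - 1) ^ 2 ≤ (6 / 11) ^ 2 * (t - 1) ^ 2 := by
  have hs : 5 / 6 ≤ √t := Real.le_sqrt_of_sq_le (by linarith)
  have hfactor : t - 1 = (√t - 1) * (√t + 1) := by
    linear_combination (-1 : ℝ) * Real.sq_sqrt (by linarith : (0 : ℝ) ≤ t)
  calc (√t - 1) ^ 2 = (√t - 1) ^ 2 * 1 := (mul_one _).symm
    _ ≤ (√t - 1) ^ 2 * (6 / 11 * (√t + 1)) ^ 2 := by gcongr; exact one_le_pow₀ (by linarith)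
    _ = (6 / 11) ^ 2 * (t - 1) ^ 2 := by rw [hfactor]; ring

theorem statement_14 {n p : ℕ} (X : Matrix (Fin n) (Fin p) ℝ)
    (hX : ‖Xᵀ * X - 1‖ ≤ 1 / 6) :
    (Xᵀ * X).PosDef ∧ ‖X - Pst X‖ ≤ 6 / 11 * ‖Xᵀ * X - 1‖ := by
  set hH := (posSemidef_tmul X).1
  set U := hH.eigenvectorUnitary
  set μ := hH.eigenvalues
  have hspec : Xᵀ * X = conjStarAlgAut ℝ _ U (diagonal μ) := by simpa using hH.spectral_theorem
  have hnorm : ‖Xᵀ * X - 1‖ ^ 2 = ∑ i, (μ i - 1) ^ 2 := by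
    rw [hspec, norm_conjStarAlgAut_diagonal_sub_one_sq]
  have hμ : ∀ i, 5 / 6 ≤ μ i := by
    intro i
    have hsq : (μ i - 1) ^ 2 ≤ (1 / 6) ^ 2 :=
      (Finset.single_le_sum (fun j _ => sq_nonneg (μ j - 1)) (Finset.mem_univ i)).trans
        (hnorm ▸ pow_le_pow_left₀ (norm_nonneg _) hX 2)
    linarith [(abs_le_of_sq_le_sq' hsq (by norm_num)).1]
  have hpos : ∀ i, 0 < μ i := fun i => by linarith [hμ i]
  refine ⟨hH.posDef_iff_eigenvalues_pos.mpr hpos, ?_⟩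
  -- `Pst X` unfolds to `X * (conjStarAlgAut ℝ _ U (diagonal fun i => √(μ i)))⁻¹`.
  have hdiff : X - Pst X = X * conjStarAlgAut ℝ _ U (diagonal fun i => 1 - (√(μ i))⁻¹) :=
    sub_mul_inv_conjStarAlgAut_diagonal U X fun i => (Real.sqrt_pos.mpr (hpos i)).ne'
  have hsq : ‖X - Pst X‖ ^ 2 ≤ (6 / 11 * ‖Xᵀ * X - 1‖) ^ 2 := by
    rw [hdiff, norm_mul_conjStarAlgAut_diagonal_sq U hspec, mul_pow, hnorm, Finset.mul_sum]
    refine Finset.sum_le_sum fun i _ => ?_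
    rw [mul_one_sub_inv_sqrt_sq (hpos i)]
    exact sq_sqrt_sub_one_le (hμ i)
  exact (pow_le_pow_iff_left₀ (norm_nonneg _) (by positivity) two_ne_zero).mp hsq

end ExPen
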